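/- arXiv:0711.1740 — 2 statements merged into one kernel-verified Lean document; each statement's English description precedes it below -/
import Mathlib

section
/- Let {P_n}_{n≥0} be a sequence of monic real polynomials with P_0 = 1, P_1(x) = x − β_0 and x·P_n(x) = P_{n+1}(x) + β_n·P_n(x) + γ_n·P_{n−1}(x) for all n ≥ 1, with γ_n ≠ 0 for all n ≥ 1. Let a_1, a_2 be real numbers with a_1 ≠ 0 and a_1² = 4·a_2, and let {Q_n}_{n≥0} be monic polynomials with deg Q_n = n such that Q_n = P_n + a_1·P_{n−1} + a_2·P_{n−2} for all n ≥ 3, and suppose {Q_n} satisfies a three-term recurrence x·Q_n(x) = Q_{n+1}(x) + β̃_n·Q_n(x) + γ̃_n·Q_{n−1}(x) for all n ≥ 1 with γ̃_n ≠ 0. Then there exist real numbers A, B, C, D, E, F such that for all n ≥ 2: β_n = A + B·n + C·n² and γ_n = D + E·n + F·n², and moreover a_1·C = 2·F and a_1·B = 2·E − 2·F. -/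
/-!
Expanding `x Q_n` in the basis `{P_k}` and comparing the coefficients of `P_n, …, P_{n-3}` (`n ≥ 4`)
gives `β̃_n = β_n`, `γ̃_n = γ_{n-2}` and two linear relations between `β` and `γ`. Because
`a₁² = 4 a₂` they combine into a vanishing third difference of `β`, so `β` is quadratic, and into
`γ_{n+1} - γ_n = (a₁/4)(β_{n+2} - β_n)`, which makes `γ` quadratic with `2F = a₁ C`.
-/

open Polynomial

theorem LinearIndependent.eq_zero_of_smul_add_smul_add_smul_add_smul
    {R M : Type*} [Ring R] [AddCommGroup M] [Module R M] {v : ℕ → M}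
    (hv : LinearIndependent R v) {n : ℕ} {a b c d : R}
    (h : a • v n + b • v (n + 1) + c • v (n + 2) + d • v (n + 3) = 0) :
    a = 0 ∧ b = 0 ∧ c = 0 ∧ d = 0 := by
  have hv4 : LinearIndependent R fun i : Fin 4 => v (n + i) :=
    hv.comp _ fun i j hij => Fin.ext (by simpa using hij)
  have := Fintype.linearIndependent_iff.mp hv4 ![a, b, c, d]
    (by simpa [Fin.sum_univ_four, add_assoc] using h)
  exact ⟨this 0, this 1, this 2, this 3⟩

namespace Polynomial

variable {R : Type*} [CommRing R]

theorem monic_and_natDegree_eq_of_threeTermRecurrence [Nontrivial R] {P : ℕ → R[X]}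
    {β γ : ℕ → R} (hP0 : P 0 = 1) (hP1 : P 1 = X - C (β 0))
    (hrec : ∀ n, 1 ≤ n → X * P n = P (n + 1) + C (β n) * P n + C (γ n) * P (n - 1))
    (n : ℕ) : (P n).Monic ∧ (P n).natDegree = n := by
  induction n using Nat.twoStepInduction with
  | zero => simp [hP0]
  | one => simp [hP1, monic_X_sub_C]
  | more k ih₀ ih₁ =>
    have hk : P (k + 2) = (X - C (β (k + 1))) * P (k + 1) - C (γ (k + 1)) * P k := by
      have h := hrec (k + 1) le_add_self
      rw [Nat.add_sub_cancel] at h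
      linear_combination -h
    have hlead : ((X - C (β (k + 1))) * P (k + 1)).Monic := (monic_X_sub_C _).mul ih₁.1
    have hdeg : ((X - C (β (k + 1))) * P (k + 1)).natDegree = k + 2 := by
      rw [(monic_X_sub_C _).natDegree_mul ih₁.1, natDegree_X_sub_C, ih₁.2]; ring
    have hlow :
        (C (γ (k + 1)) * P k).natDegree < ((X - C (β (k + 1))) * P (k + 1)).natDegree := by
      rw [hdeg]
      exact (natDegree_C_mul_le _ _).trans_lt (by rw [ih₀.2]; omega)
    rw [hk]
    exact ⟨hlead.sub_of_left (degree_lt_degree hlow),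
      by rw [natDegree_sub_eq_left_of_natDegree_lt hlow, hdeg]⟩

theorem linearIndependent_of_threeTermRecurrence [IsDomain R] {P : ℕ → R[X]}
    {β γ : ℕ → R} (hP0 : P 0 = 1) (hP1 : P 1 = X - C (β 0))
    (hrec : ∀ n, 1 ≤ n → X * P n = P (n + 1) + C (β n) * P n + C (γ n) * P (n - 1)) :
    LinearIndependent R P :=
  Sequence.linearIndependent ⟨P, fun n => by
    obtain ⟨hmonic, hdeg⟩ := monic_and_natDegree_eq_of_threeTermRecurrence hP0 hP1 hrec n
    rw [degree_eq_natDegree hmonic.ne_zero, hdeg]⟩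

theorem recurrence_coeff_relations {P Q : ℕ → R[X]} {β γ βt γt : ℕ → R}
    {a1 a2 : R} (hP : LinearIndependent R P)
    (hPrec : ∀ n, 1 ≤ n → X * P n = P (n + 1) + C (β n) * P n + C (γ n) * P (n - 1))
    (hQ : ∀ n, 3 ≤ n → Q n = P n + C a1 * P (n - 1) + C a2 * P (n - 2))
    (hQrec : ∀ n, 1 ≤ n → X * Q n = Q (n + 1) + C (βt n) * Q n + C (γt n) * Q (n - 1))
    (m : ℕ) :
    βt (m + 4) = β (m + 4) ∧
      γt (m + 4) = γ (m + 4) + a1 * (β (m + 3) - βt (m + 4)) ∧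
      a1 * γt (m + 4) + a2 * βt (m + 4) = a1 * γ (m + 3) + a2 * β (m + 2) ∧
      a2 * γt (m + 4) = a2 * γ (m + 2) := by
  have hQ' : ∀ n, Q (n + 3) = P (n + 3) + C a1 * P (n + 2) + C a2 * P (n + 1) :=
    fun n => hQ (n + 3) le_add_self
  have hPrec' : ∀ n,
      X * P (n + 1) = P (n + 2) + C (β (n + 1)) * P (n + 1) + C (γ (n + 1)) * P n :=
    fun n => hPrec (n + 1) le_add_self
  have hQm := hQrec (m + 4) le_add_self
  rw [show m + 4 - 1 = m + 3 from rfl, hQ' (m + 2), hQ' (m + 1), hQ' m] at hQm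
  obtain ⟨h₁, h₂, h₃, h₄⟩ := hP.eq_zero_of_smul_add_smul_add_smul_add_smul (n := m + 1)
    (a := a2 * γ (m + 2) - a2 * γt (m + 4))
    (b := a1 * γ (m + 3) + a2 * β (m + 2) - a2 * βt (m + 4) - a1 * γt (m + 4))
    (c := γ (m + 4) + a1 * β (m + 3) - a1 * βt (m + 4) - γt (m + 4))
    (d := β (m + 4) - βt (m + 4)) (by
      simp only [smul_eq_C_mul, C_add, C_sub, C_mul]
      linear_combination hQm - hPrec' (m + 3) - C a1 * hPrec' (m + 2) - C a2 * hPrec' (m + 1))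
  exact ⟨by linear_combination -h₄, by linear_combination -h₃, by linear_combination -h₂,
    by linear_combination -h₁⟩

end Polynomial

section Sequences

variable {K : Type*} [Field K] [CharZero K]

theorem exists_eq_quadratic_of_sub_eq_linear {u : ℕ → K} {k : ℕ} {p q : K}
    (h : ∀ n, k ≤ n → u (n + 1) - u n = p + q * n) :
    ∃ D, ∀ n, k ≤ n → u n = D + (p - q / 2) * n + q / 2 * n ^ 2 := by
  refine ⟨u k - (p - q / 2) * k - q / 2 * k ^ 2, fun n hn => ?_⟩
  induction n, hn using Nat.le_induction with
  | base => ring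
  | succ n hn ih =>
    push_cast
    linear_combination h n hn + ih

theorem exists_eq_quadratic_of_third_diff_eq_zero {u : ℕ → K} {k : ℕ}
    (h : ∀ n, k ≤ n → u (n + 3) - 3 * u (n + 2) + 3 * u (n + 1) - u n = 0) :
    ∃ A B C, ∀ n, k ≤ n → u n = A + B * n + C * n ^ 2 := by
  obtain ⟨c, hc⟩ := exists_eq_quadratic_of_sub_eq_linear
    (u := fun n => u (n + 2) - 2 * u (n + 1) + u n) (p := 0) (q := 0)
    fun n hn => by linear_combination h n hn
  obtain ⟨d, hd⟩ := exists_eq_quadratic_of_sub_eq_linear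
    (u := fun n => u (n + 1) - u n) (p := c) (q := 0)
    fun n hn => by linear_combination hc n hn
  obtain ⟨A, hA⟩ := exists_eq_quadratic_of_sub_eq_linear (u := u) (p := d) (q := c)
    fun n hn => by linear_combination hd n hn
  exact ⟨A, _, _, hA⟩

theorem third_diff_eq_zero_and_sub_eq_of_coeff_relations {β γ βt γt : ℕ → K} {a1 a2 : K}
    (ha1 : a1 ≠ 0) (ha : a1 ^ 2 = 4 * a2)
    (h : ∀ m, βt (m + 4) = β (m + 4) ∧
      γt (m + 4) = γ (m + 4) + a1 * (β (m + 3) - βt (m + 4)) ∧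
      a1 * γt (m + 4) + a2 * βt (m + 4) = a1 * γ (m + 3) + a2 * β (m + 2) ∧
      a2 * γt (m + 4) = a2 * γ (m + 2)) :
    (∀ n, 2 ≤ n → β (n + 3) - 3 * β (n + 2) + 3 * β (n + 1) - β n = 0) ∧
      ∀ n, 2 ≤ n → γ (n + 1) - γ n = a1 / 4 * (β (n + 2) - β n) := by
  have ha2 : a2 ≠ 0 := by
    rintro rfl
    exact ha1 (pow_eq_zero_iff two_ne_zero |>.mp (by simpa using ha))
  have hγt m : γt (m + 4) = γ (m + 2) := mul_left_cancel₀ ha2 (h m).2.2.2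
  have hstep m : γ (m + 3) - γ (m + 2) = a1 / 4 * (β (m + 4) - β (m + 2)) := by
    refine mul_left_cancel₀ ha1 ?_
    linear_combination
      -(h m).2.2.1 + a1 * hγt m + a2 * (h m).1 - (β (m + 4) - β (m + 2)) / 4 * ha
  have hstep₂ m : γ (m + 4) - γ (m + 2) = a1 * (β (m + 4) - β (m + 3)) := by
    linear_combination -(h m).2.1 + hγt m + a1 * (h m).1
  refine ⟨fun n hn => ?_, fun n hn => ?_⟩ <;>
    obtain ⟨m, rfl⟩ : ∃ m, n = m + 2 := ⟨n - 2, by omega⟩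
  · -- two consecutive `hstep`s against one `hstep₂` leave `a₁/4` times the third difference
    refine (mul_eq_zero.mp ?_).resolve_left ha1
    linear_combination -4 * (hstep m + hstep (m + 1) - hstep₂ m)
  · exact hstep m

end Sequences

theorem stmt_6_general (P Q : ℕ → Polynomial ℝ) (β γ βt γt : ℕ → ℝ) (a1 a2 : ℝ)
    (ha1 : a1 ≠ 0) (ha : a1 ^ 2 = 4 * a2)
    (hP0 : P 0 = 1) (hP1 : P 1 = X - Polynomial.C (β 0))
    (hPrec : ∀ n, 1 ≤ n → X * P n
      = P (n + 1) + Polynomial.C (β n) * P n + Polynomial.C (γ n) * P (n - 1))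
    (hQ : ∀ n, 3 ≤ n → Q n = P n + Polynomial.C a1 * P (n - 1) + Polynomial.C a2 * P (n - 2))
    (hQrec : ∀ n, 1 ≤ n → X * Q n
      = Q (n + 1) + Polynomial.C (βt n) * Q n + Polynomial.C (γt n) * Q (n - 1)) :
    ∃ A B C D E F : ℝ,
      (∀ n : ℕ, 2 ≤ n → β n = A + B * n + C * n ^ 2 ∧ γ n = D + E * n + F * n ^ 2) ∧
      a1 * C = 2 * F ∧ a1 * B = 2 * E - 2 * F := by
  have hP := linearIndependent_of_threeTermRecurrence hP0 hP1 hPrec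
  obtain ⟨hβ3, hγ1⟩ := third_diff_eq_zero_and_sub_eq_of_coeff_relations ha1 ha
    (recurrence_coeff_relations hP hPrec hQ hQrec)
  obtain ⟨A, B, C, hβ⟩ := exists_eq_quadratic_of_third_diff_eq_zero hβ3
  obtain ⟨D, hγ⟩ := exists_eq_quadratic_of_sub_eq_linear
    (p := a1 * (B + 2 * C) / 2) (q := a1 * C) fun n hn => by
      rw [hγ1 n hn, hβ (n + 2) (by omega), hβ n hn]
      push_cast
      ring
  exact ⟨A, B, C, D, _, _, fun n hn => ⟨hβ n hn, hγ n hn⟩, by ring, by ring⟩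

theorem stmt_6 (P Q : ℕ → Polynomial ℝ) (β γ βt γt : ℕ → ℝ) (a1 a2 : ℝ)
    (ha1 : a1 ≠ 0) (ha : a1 ^ 2 = 4 * a2)
    (hPmonic : ∀ n, (P n).Monic)
    (hP0 : P 0 = 1) (hP1 : P 1 = X - Polynomial.C (β 0))
    (hPrec : ∀ n, 1 ≤ n → X * P n
      = P (n + 1) + Polynomial.C (β n) * P n + Polynomial.C (γ n) * P (n - 1))
    (hγ : ∀ n, 1 ≤ n → γ n ≠ 0)
    (hQmonic : ∀ n, (Q n).Monic) (hQdeg : ∀ n, (Q n).natDegree = n)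
    (hQ : ∀ n, 3 ≤ n → Q n = P n + Polynomial.C a1 * P (n - 1) + Polynomial.C a2 * P (n - 2))
    (hQrec : ∀ n, 1 ≤ n → X * Q n
      = Q (n + 1) + Polynomial.C (βt n) * Q n + Polynomial.C (γt n) * Q (n - 1))
    (hγt : ∀ n, 1 ≤ n → γt n ≠ 0) :
    ∃ A B C D E F : ℝ,
      (∀ n : ℕ, 2 ≤ n → β n = A + B * n + C * n ^ 2 ∧ γ n = D + E * n + F * n ^ 2) ∧
      a1 * C = 2 * F ∧ a1 * B = 2 * E - 2 * F :=
  stmt_6_general P Q β γ βt γt a1 a2 ha1 ha hP0 hP1 hPrec hQ hQrec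
end

section
/- Let {P_n}_{n≥0} be a sequence of monic real polynomials with P_0 = 1, P_1(x) = x − β_0 and x·P_n(x) = P_{n+1}(x) + β_n·P_n(x) + γ_n·P_{n−1}(x) for all n ≥ 1, with γ_n ≠ 0 for all n ≥ 1. Let a_1, a_2 be real numbers with a_1 ≠ 0, a_2 ≠ 0 and a_1² > 4·a_2, and let λ be the unique real number in (−1,1) satisfying a_1²·λ = a_2·(1+λ)² (note λ ≠ 0). Let {Q_n}_{n≥0} be monic polynomials with deg Q_n = n such that Q_n = P_n + a_1·P_{n−1} + a_2·P_{n−2} for all n ≥ 3, and suppose {Q_n} satisfies a three-term recurrence x·Q_n(x) = Q_{n+1}(x) + β̃_n·Q_n(x) + γ̃_n·Q_{n−1}(x) for all n ≥ 1 with γ̃_n ≠ 0. Then there exist real numbers A, B, C, D, E, F such that for all n ≥ 2: β_n = A + B·λⁿ + C·λ⁻ⁿ and γ_n = D + E·λⁿ + F·λ⁻ⁿ, and moreover a_1·C = (1+λ)·F and a_1·λ·B = (1+λ)·E. -/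
open Polynomial

/-!
Expanding `X * Q n` in the basis `P` and comparing coefficients of `P (n - 1)` and `P (n - 2)`
gives, for `k ≥ 2`, `γ (k + 2) - γ k = a₁ (β (k + 2) - β (k + 1))` and
`a₁ (γ (k + 1) - γ k) = a₂ (β (k + 2) - β k)`. Eliminating `γ`, the differences of `β` satisfy a
linear recurrence whose characteristic polynomial `a₂ x² - (a₁² - 2 a₂) x + a₂` has the roots
`λ` and `λ⁻¹`, by the defining equation of `λ`. Summing these differences gives `β`, and the second
relation then gives the differences of `γ`.
-/

section LinearRecurrence

variable {K : Type*} [Field K]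

theorem exists_eq_mul_pow_add_mul_pow {x y : K} (hxy : x ≠ y) {u : ℕ → K}
    (h : ∀ k, u (k + 2) = (x + y) * u (k + 1) - x * y * u k) :
    ∃ b c : K, ∀ k, u k = b * x ^ k + c * y ^ k := by
  have hxy' : x - y ≠ 0 := sub_ne_zero.mpr hxy
  refine ⟨(u 1 - y * u 0) / (x - y), (x * u 0 - u 1) / (x - y), fun k => ?_⟩
  induction k using Nat.twoStepInduction with
  | zero => field_simp; ring
  | one => field_simp; ring
  | more k ih₀ ih₁ => rw [h, ih₀, ih₁]; ring

theorem eq_add_mul_pow_add_mul_pow_of_sub_eq {x y b c : K} (hx : x ≠ 1) (hy : y ≠ 1)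
    {u : ℕ → K} (h : ∀ k, u (k + 1) - u k = b * x ^ k + c * y ^ k) (k : ℕ) :
    u k = (u 0 - b / (x - 1) - c / (y - 1)) + b / (x - 1) * x ^ k + c / (y - 1) * y ^ k := by
  have hx' : x - 1 ≠ 0 := sub_ne_zero.mpr hx
  have hy' : y - 1 ≠ 0 := sub_ne_zero.mpr hy
  induction k with
  | zero => ring
  | succ k ih =>
    rw [eq_add_of_sub_eq (h k), ih]
    field_simp
    ring

theorem exists_closed_form_of_relations {u v : ℕ → K} {a₁ a₂ l : K} (ha₁ : a₁ ≠ 0) (ha₂ : a₂ ≠ 0)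
    (hl₀ : l ≠ 0) (hl₁ : l ≠ 1) (hl₂ : 1 + l ≠ 0) (hl : a₁ ^ 2 * l = a₂ * (1 + l) ^ 2)
    (h₁ : ∀ k, v (k + 2) - v k = a₁ * (u (k + 2) - u (k + 1)))
    (h₂ : ∀ k, a₁ * (v (k + 1) - v k) = a₂ * (u (k + 2) - u k)) :
    ∃ A B C D E F : K,
      (∀ k, u k = A + B * l ^ k + C * (l ^ k)⁻¹ ∧ v k = D + E * l ^ k + F * (l ^ k)⁻¹) ∧
      a₁ * C = (1 + l) * F ∧ a₁ * l * B = (1 + l) * E := by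
  have hinv₁ : l⁻¹ ≠ 1 := inv_ne_one.mpr hl₁
  have hne : l ≠ l⁻¹ := by
    intro h
    have : (l - 1) * (1 + l) = 0 := by
      field_simp at h
      linear_combination h
    rcases mul_eq_zero.mp this with h' | h'
    · exact hl₁ (sub_eq_zero.mp h')
    · exact hl₂ h'
  have hd : ∀ k, u (k + 3) - u (k + 2) = (l + l⁻¹) * (u (k + 2) - u (k + 1))
      - l * l⁻¹ * (u (k + 1) - u k) := by
    intro k
    have hk₂ := h₂ (k + 1)
    simp only [add_assoc, Nat.reduceAdd] at hk₂
    have key : a₂ * (u (k + 3) - u (k + 2)) = (a₁ ^ 2 - 2 * a₂) * (u (k + 2) - u (k + 1))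
        - a₂ * (u (k + 1) - u k) := by
      linear_combination -hk₂ - h₂ k + a₁ * h₁ k
    have hsum : a₁ ^ 2 - 2 * a₂ = a₂ * (l + l⁻¹) := by
      field_simp
      linear_combination hl
    rw [mul_inv_cancel₀ hl₀, one_mul]
    apply mul_left_cancel₀ ha₂
    linear_combination key + (u (k + 2) - u (k + 1)) * hsum
  obtain ⟨b, c, hdu⟩ := exists_eq_mul_pow_add_mul_pow (u := fun k => u (k + 1) - u k) hne hd
  have hdv : ∀ k, v (k + 1) - v k
      = a₂ / a₁ * b * (l + 1) * l ^ k + a₂ / a₁ * c * (l⁻¹ + 1) * l⁻¹ ^ k := by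
    intro k
    apply mul_left_cancel₀ ha₁
    have hk₁ : u (k + 2) - u (k + 1) = b * l ^ (k + 1) + c * l⁻¹ ^ (k + 1) := hdu (k + 1)
    have hdiv : a₁ * (a₂ / a₁) = a₂ := mul_div_cancel₀ _ ha₁
    rw [h₂ k]
    linear_combination a₂ * (hk₁ + hdu k)
      - (b * (l + 1) * l ^ k + c * (l⁻¹ + 1) * l⁻¹ ^ k) * hdiv
  have hu := eq_add_mul_pow_add_mul_pow_of_sub_eq hl₁ hinv₁ hdu
  have hv := eq_add_mul_pow_add_mul_pow_of_sub_eq hl₁ hinv₁ hdv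
  simp only [inv_pow] at hu hv
  refine ⟨_, _, _, _, _, _, fun k => ⟨hu k, hv k⟩, ?_, ?_⟩
  · field_simp
    linear_combination c * hl
  · field_simp
    linear_combination b * hl

end LinearRecurrence

section ThreeTermRecurrence

variable {R : Type*} [CommRing R] [IsDomain R] {P : ℕ → R[X]} {β γ : ℕ → R}

theorem degree_eq_of_three_term_recurrence (hP0 : P 0 = 1) (hP1 : P 1 = X - C (β 0))
    (hrec : ∀ n, X * P (n + 1) = P (n + 2) + C (β (n + 1)) * P (n + 1) + C (γ (n + 1)) * P n) :
    ∀ n, (P n).degree = n := by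
  intro n
  induction n using Nat.twoStepInduction with
  | zero => simp [hP0]
  | one => simp [hP1]
  | more n ih₀ ih₁ =>
    have hP : P (n + 2) = (X - C (β (n + 1))) * P (n + 1) - C (γ (n + 1)) * P n := by
      linear_combination -hrec n
    have hlead : ((X - C (β (n + 1))) * P (n + 1)).degree = ↑(n + 2) := by
      rw [degree_mul, degree_X_sub_C, ih₁]
      norm_cast
      omega
    have hlt : (C (γ (n + 1)) * P n).degree < ↑(n + 2) := by
      rw [C_mul']
      refine (degree_smul_le _ _).trans_lt ?_
      rw [ih₀]
      exact_mod_cast (by omega : n < n + 2)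
    rwa [hP, degree_sub_eq_left_of_degree_lt (hlead ▸ hlt)]

theorem coeffs_eq_zero_of_degree_eq (hP : ∀ n, (P n).degree = n) {m : ℕ} {c₀ c₁ c₂ c₃ : R}
    (h : C c₀ * P m + C c₁ * P (m + 1) + C c₂ * P (m + 2) + C c₃ * P (m + 3) = 0) :
    c₀ = 0 ∧ c₁ = 0 ∧ c₂ = 0 ∧ c₃ = 0 := by
  have hlt : ∀ i j, i < j → (P i).coeff j = 0 := fun i j hij =>
    coeff_eq_zero_of_degree_lt (by rw [hP]; exact_mod_cast hij)
  have hlead : ∀ i, (P i).coeff i ≠ 0 := fun i => coeff_ne_zero_of_eq_degree (hP i)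
  have hcoeff : ∀ j, c₀ * (P m).coeff j + c₁ * (P (m + 1)).coeff j + c₂ * (P (m + 2)).coeff j
      + c₃ * (P (m + 3)).coeff j = 0 := fun j => by
    simpa only [coeff_add, coeff_C_mul, coeff_zero] using congrArg (coeff · j) h
  obtain rfl : c₃ = 0 := by simpa [hlt, hlead] using hcoeff (m + 3)
  obtain rfl : c₂ = 0 := by simpa [hlt, hlead] using hcoeff (m + 2)
  obtain rfl : c₁ = 0 := by simpa [hlt, hlead] using hcoeff (m + 1)
  obtain rfl : c₀ = 0 := by simpa [hlt, hlead] using hcoeff m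
  simp

theorem recurrence_coeff_relations {Q : ℕ → R[X]} {βt γt : ℕ → R} {a₁ a₂ : R}
    (hP : ∀ n, (P n).degree = n) (ha₂ : a₂ ≠ 0)
    (hPrec : ∀ n, X * P (n + 1) = P (n + 2) + C (β (n + 1)) * P (n + 1) + C (γ (n + 1)) * P n)
    (hQ : ∀ n, Q (n + 3) = P (n + 3) + C a₁ * P (n + 2) + C a₂ * P (n + 1))
    (hQrec : ∀ n, X * Q (n + 1) = Q (n + 2) + C (βt (n + 1)) * Q (n + 1) + C (γt (n + 1)) * Q n)
    (k : ℕ) :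
    γ (k + 4) - γ (k + 2) = a₁ * (β (k + 4) - β (k + 3)) ∧
      a₁ * (γ (k + 3) - γ (k + 2)) = a₂ * (β (k + 4) - β (k + 2)) := by
  have hQ₅ : Q (k + 5) = P (k + 5) + C a₁ * P (k + 4) + C a₂ * P (k + 3) := hQ (k + 2)
  have hQ₄ : Q (k + 4) = P (k + 4) + C a₁ * P (k + 3) + C a₂ * P (k + 2) := hQ (k + 1)
  have hQ₃ : Q (k + 3) = P (k + 3) + C a₁ * P (k + 2) + C a₂ * P (k + 1) := hQ k
  have hP₄ : X * P (k + 4) = P (k + 5) + C (β (k + 4)) * P (k + 4) + C (γ (k + 4)) * P (k + 3) :=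
    hPrec (k + 3)
  have hP₃ : X * P (k + 3) = P (k + 4) + C (β (k + 3)) * P (k + 3) + C (γ (k + 3)) * P (k + 2) :=
    hPrec (k + 2)
  have hP₂ : X * P (k + 2) = P (k + 3) + C (β (k + 2)) * P (k + 2) + C (γ (k + 2)) * P (k + 1) :=
    hPrec (k + 1)
  have hQ₄rec :
      X * Q (k + 4) = Q (k + 5) + C (βt (k + 4)) * Q (k + 4) + C (γt (k + 4)) * Q (k + 3) :=
    hQrec (k + 3)
  have hcomb : C (a₂ * γ (k + 2) - a₂ * γt (k + 4)) * P (k + 1)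
      + C (a₁ * γ (k + 3) + a₂ * β (k + 2) - a₂ * βt (k + 4) - a₁ * γt (k + 4)) * P (k + 1 + 1)
      + C (γ (k + 4) + a₁ * β (k + 3) - a₁ * βt (k + 4) - γt (k + 4)) * P (k + 1 + 2)
      + C (β (k + 4) - βt (k + 4)) * P (k + 1 + 3) = 0 := by
    simp only [map_sub, map_add, map_mul]
    rw [hQ₅, hQ₄, hQ₃] at hQ₄rec
    linear_combination hQ₄rec - hP₄ - C a₁ * hP₃ - C a₂ * hP₂
  obtain ⟨h₁, h₂, h₃, h₄⟩ := coeffs_eq_zero_of_degree_eq hP hcomb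
  have hγt : γt (k + 4) = γ (k + 2) :=
    (mul_left_cancel₀ ha₂ (sub_eq_zero.mp h₁)).symm
  constructor
  · linear_combination h₃ + hγt - a₁ * h₄
  · linear_combination h₂ + a₁ * hγt - a₂ * h₄

end ThreeTermRecurrence

theorem stmt_7_general (P Q : ℕ → Polynomial ℝ) (β γ βt γt : ℕ → ℝ) (a1 a2 l : ℝ)
    (ha1 : a1 ≠ 0) (ha2 : a2 ≠ 0)
    (hl1 : -1 < l) (hl2 : l < 1) (hl0 : l ≠ 0)
    (hl : a1 ^ 2 * l = a2 * (1 + l) ^ 2)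
    (hP0 : P 0 = 1) (hP1 : P 1 = X - Polynomial.C (β 0))
    (hPrec : ∀ n, 1 ≤ n → X * P n
      = P (n + 1) + Polynomial.C (β n) * P n + Polynomial.C (γ n) * P (n - 1))
    (hQ : ∀ n, 3 ≤ n → Q n = P n + Polynomial.C a1 * P (n - 1) + Polynomial.C a2 * P (n - 2))
    (hQrec : ∀ n, 1 ≤ n → X * Q n
      = Q (n + 1) + Polynomial.C (βt n) * Q n + Polynomial.C (γt n) * Q (n - 1)) :
    ∃ A B C D E F : ℝ,
      (∀ n : ℕ, 2 ≤ n →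
        β n = A + B * l ^ n + C * (l ^ n)⁻¹ ∧ γ n = D + E * l ^ n + F * (l ^ n)⁻¹) ∧
      a1 * C = (1 + l) * F ∧ a1 * l * B = (1 + l) * E := by
  have hPrec' (n : ℕ) :
      X * P (n + 1) = P (n + 2) + C (β (n + 1)) * P (n + 1) + C (γ (n + 1)) * P n :=
    hPrec (n + 1) n.succ_pos
  have hrel := recurrence_coeff_relations (degree_eq_of_three_term_recurrence hP0 hP1 hPrec')
    ha2 hPrec' (fun n => hQ (n + 3) (by omega)) (fun n => hQrec (n + 1) n.succ_pos)
  obtain ⟨A, B, C, D, E, F, hform, hCF, hBE⟩ :=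
    exists_closed_form_of_relations (u := fun k => β (k + 2)) (v := fun k => γ (k + 2))
      ha1 ha2 hl0 hl2.ne (by linarith) hl (fun k => (hrel k).1) (fun k => (hrel k).2)
  refine ⟨A, B / l ^ 2, C * l ^ 2, D, E / l ^ 2, F * l ^ 2, fun n hn => ?_, ?_, ?_⟩
  · obtain ⟨k, rfl⟩ := Nat.exists_eq_add_of_le' hn
    obtain ⟨hβ, hγ⟩ := hform k
    simp only [hβ, hγ, pow_add]
    constructor <;> field_simp
  · rw [← mul_assoc, hCF, mul_assoc]
  · rw [← mul_div_assoc, hBE, mul_div_assoc]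

theorem stmt_7 (P Q : ℕ → Polynomial ℝ) (β γ βt γt : ℕ → ℝ) (a1 a2 l : ℝ)
    (ha1 : a1 ≠ 0) (ha2 : a2 ≠ 0) (ha : a1 ^ 2 > 4 * a2)
    (hl1 : -1 < l) (hl2 : l < 1) (hl0 : l ≠ 0)
    (hl : a1 ^ 2 * l = a2 * (1 + l) ^ 2)
    (hPmonic : ∀ n, (P n).Monic)
    (hP0 : P 0 = 1) (hP1 : P 1 = X - Polynomial.C (β 0))
    (hPrec : ∀ n, 1 ≤ n → X * P n
      = P (n + 1) + Polynomial.C (β n) * P n + Polynomial.C (γ n) * P (n - 1))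
    (hγ : ∀ n, 1 ≤ n → γ n ≠ 0)
    (hQmonic : ∀ n, (Q n).Monic) (hQdeg : ∀ n, (Q n).natDegree = n)
    (hQ : ∀ n, 3 ≤ n → Q n = P n + Polynomial.C a1 * P (n - 1) + Polynomial.C a2 * P (n - 2))
    (hQrec : ∀ n, 1 ≤ n → X * Q n
      = Q (n + 1) + Polynomial.C (βt n) * Q n + Polynomial.C (γt n) * Q (n - 1))
    (hγt : ∀ n, 1 ≤ n → γt n ≠ 0) :
    ∃ A B C D E F : ℝ,
      (∀ n : ℕ, 2 ≤ n →
        β n = A + B * l ^ n + C * (l ^ n)⁻¹ ∧ γ n = D + E * l ^ n + F * (l ^ n)⁻¹) ∧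
      a1 * C = (1 + l) * F ∧ a1 * l * B = (1 + l) * E :=
  stmt_7_general P Q β γ βt γt a1 a2 l ha1 ha2 hl1 hl2 hl0 hl hP0 hP1 hPrec hQ hQrec
end
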